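/- Let P_1, P_2 ∈ ℝ^{n×n} be symmetric positive definite, B, L ∈ ℝ^{n×1}, and Q ∈ ℝ^{n×n} symmetric. Define V(z,e) := z^⊤P_1 z + e^⊤P_2 e and c_4 := 2‖P_1 B‖‖Q‖ / λ_min(P_1)^{3/2} + 4‖P_2(B+L)‖‖Q‖ / (√(λ_min(P_1)) λ_min(P_2)) + 2‖P_2(B+L)‖‖Q‖ / λ_min(P_2)^{3/2}. Then for all z, e ∈ ℝ^n: |2 z^⊤P_1 B (z^⊤Q z) + 4 e^⊤P_2 (B+L) (z^⊤Q e) + 2 e^⊤P_2 (B+L) (e^⊤Q e)| ≤ c_4 · V(z,e)^{3/2}. -/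

import Mathlib

/-
Each summand is a linear form times a quadratic form in `(z, e)`, so Cauchy–Schwarz and the
operator norm of `Q` bound it by a cubic monomial in `‖z‖, ‖e‖`. Rayleigh's bound
`λ_min(P) ‖x‖² ≤ xᵀ P x` gives `‖z‖ ≤ √V / √λ_min(P₁)` and `‖e‖ ≤ √V / √λ_min(P₂)`, which turns
each monomial into the corresponding summand of `c₄` times `√V ³ = V ^ (3/2)`.
-/

open Matrix
noncomputable section

/-- Spectral norm: operator norm induced by the Euclidean norms. -/
def opNorm {m n : Type*} [Fintype m] [Fintype n] [DecidableEq n] (M : Matrix m n ℝ) : ℝ :=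
  ‖(Matrix.toEuclideanLin M).toContinuousLinearMap‖

/-- Euclidean norm of a real vector. -/
def evnorm {n : Type*} [Fintype n] (v : n → ℝ) : ℝ :=
  Real.sqrt (∑ i, (v i) ^ 2)

section EuclideanBounds

variable {ι κ : Type*} [Fintype ι] [Fintype κ]

lemma evnorm_eq_norm_toLp (v : ι → ℝ) : evnorm v = ‖WithLp.toLp 2 v‖ := by
  simp [evnorm, EuclideanSpace.norm_eq]

lemma evnorm_nonneg (v : ι → ℝ) : 0 ≤ evnorm v := Real.sqrt_nonneg _

lemma evnorm_sq (v : ι → ℝ) : evnorm v ^ 2 = v ⬝ᵥ v := by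
  rw [evnorm, Real.sq_sqrt (by positivity)]
  simp [dotProduct, sq]

lemma abs_dotProduct_le_evnorm_mul (v w : ι → ℝ) : |v ⬝ᵥ w| ≤ evnorm v * evnorm w := by
  rw [evnorm_eq_norm_toLp, evnorm_eq_norm_toLp]
  simpa [PiLp.inner_apply, dotProduct, mul_comm] using
    abs_real_inner_le_norm (WithLp.toLp 2 v) (WithLp.toLp 2 w)

lemma opNorm_nonneg [DecidableEq ι] (M : Matrix κ ι ℝ) : 0 ≤ opNorm M := norm_nonneg _

lemma evnorm_mulVec_le [DecidableEq ι] (M : Matrix κ ι ℝ) (v : ι → ℝ) :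
    evnorm (M *ᵥ v) ≤ opNorm M * evnorm v := by
  rw [evnorm_eq_norm_toLp, evnorm_eq_norm_toLp]
  exact (Matrix.toEuclideanLin M).toContinuousLinearMap.le_opNorm (WithLp.toLp 2 v)

lemma abs_dotProduct_mulVec_le [DecidableEq ι] (M : Matrix κ ι ℝ) (v : κ → ℝ) (w : ι → ℝ) :
    |v ⬝ᵥ (M *ᵥ w)| ≤ opNorm M * evnorm v * evnorm w :=
  calc |v ⬝ᵥ (M *ᵥ w)| ≤ evnorm v * evnorm (M *ᵥ w) := abs_dotProduct_le_evnorm_mul v _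
    _ ≤ evnorm v * (opNorm M * evnorm w) :=
      mul_le_mul_of_nonneg_left (evnorm_mulVec_le M w) (evnorm_nonneg v)
    _ = opNorm M * evnorm v * evnorm w := by ring

end EuclideanBounds

namespace Matrix.IsHermitian

variable {ι : Type*} [Fintype ι] [DecidableEq ι] {A : Matrix ι ι ℝ}

lemma posSemidef_sub_iInf_eigenvalues (hA : A.IsHermitian) :
    (A - algebraMap ℝ _ (⨅ i, hA.eigenvalues i)).PosSemidef := by
  refine posSemidef_iff_isHermitian_and_spectrum_nonneg.mpr
    ⟨hA.sub (isHermitian_diagonal _), ?_⟩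
  rw [← spectrum.sub_singleton_eq, hA.spectrum_real_eq_range_eigenvalues]
  rintro _ ⟨_, ⟨i, rfl⟩, _, rfl, rfl⟩
  exact sub_nonneg.mpr (ciInf_le (Set.finite_range hA.eigenvalues).bddBelow i)

lemma iInf_eigenvalues_mul_evnorm_sq_le (hA : A.IsHermitian) (x : ι → ℝ) :
    (⨅ i, hA.eigenvalues i) * evnorm x ^ 2 ≤ x ⬝ᵥ (A *ᵥ x) := by
  have := hA.posSemidef_sub_iInf_eigenvalues.dotProduct_mulVec_nonneg x
  rw [star_trivial, sub_mulVec, dotProduct_sub, Algebra.algebraMap_eq_smul_one, smul_mulVec,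
    one_mulVec, dotProduct_smul, smul_eq_mul] at this
  rw [evnorm_sq]
  linarith

lemma evnorm_le_sqrt_div (hA : A.IsHermitian) (hμ : 0 < ⨅ i, hA.eigenvalues i) (x : ι → ℝ) :
    evnorm x ≤ √(x ⬝ᵥ (A *ᵥ x)) / √(⨅ i, hA.eigenvalues i) := by
  rw [le_div_iff₀ (Real.sqrt_pos.mpr hμ), mul_comm, ← Real.sqrt_sq (evnorm_nonneg x),
    ← Real.sqrt_mul hμ.le]
  exact Real.sqrt_le_sqrt (hA.iInf_eigenvalues_mul_evnorm_sq_le x)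

end Matrix.IsHermitian

lemma Matrix.PosDef.iInf_eigenvalues_pos {ι : Type*} [Fintype ι] [DecidableEq ι] [Nonempty ι]
    {A : Matrix ι ι ℝ} (hA : A.PosDef) : 0 < ⨅ i, hA.1.eigenvalues i := by
  obtain ⟨i, hi⟩ := Finite.exists_min hA.1.eigenvalues
  exact (hA.eigenvalues_pos i).trans_le (le_ciInf hi)

lemma Real.rpow_three_halves {x : ℝ} (hx : 0 ≤ x) : x ^ ((3 : ℝ) / 2) = √x ^ 3 := by
  rw [Real.sqrt_eq_rpow, ← Real.rpow_natCast, ← Real.rpow_mul hx]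
  norm_num

lemma abs_higher_order_terms_le {ι : Type*} [Fintype ι] [DecidableEq ι]
    (p r z e : ι → ℝ) (Q : Matrix ι ι ℝ) :
    |2 * (z ⬝ᵥ p) * (z ⬝ᵥ (Q *ᵥ z)) + 4 * (e ⬝ᵥ r) * (z ⬝ᵥ (Q *ᵥ e))
        + 2 * (e ⬝ᵥ r) * (e ⬝ᵥ (Q *ᵥ e))| ≤
      opNorm Q * (2 * evnorm p * evnorm z ^ 3 + 4 * evnorm r * (evnorm z * evnorm e ^ 2)
        + 2 * evnorm r * evnorm e ^ 3) := by
  have product_le (x y w q : ι → ℝ) :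
      |(x ⬝ᵥ q) * (y ⬝ᵥ (Q *ᵥ w))| ≤ evnorm x * evnorm q * (opNorm Q * evnorm y * evnorm w) := by
    rw [abs_mul]
    gcongr
    exacts [mul_nonneg (evnorm_nonneg x) (evnorm_nonneg q), abs_dotProduct_le_evnorm_mul x q,
      abs_dotProduct_mulVec_le Q y w]
  have h1 := abs_le.mp (product_le z z z p)
  have h2 := abs_le.mp (product_le e z e r)
  have h3 := abs_le.mp (product_le e e e r)
  rw [abs_le]
  constructor <;> nlinarith

theorem higher_order_term_bound_general
    (n : ℕ) (P1 P2 : Matrix (Fin n) (Fin n) ℝ) (hP1 : P1.PosDef) (hP2 : P2.PosDef)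
    (B L : Fin n → ℝ) (Q : Matrix (Fin n) (Fin n) ℝ)
    (c4 : ℝ)
    (hc4 : c4 =
      2 * evnorm (P1 *ᵥ B) * opNorm Q / (⨅ i, hP1.1.eigenvalues i) ^ ((3 : ℝ) / 2) +
      4 * evnorm (P2 *ᵥ (B + L)) * opNorm Q /
        (Real.sqrt (⨅ i, hP1.1.eigenvalues i) * (⨅ i, hP2.1.eigenvalues i)) +
      2 * evnorm (P2 *ᵥ (B + L)) * opNorm Q / (⨅ i, hP2.1.eigenvalues i) ^ ((3 : ℝ) / 2)) :
    ∀ z e : Fin n → ℝ,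
      |2 * (z ⬝ᵥ (P1 *ᵥ B)) * (z ⬝ᵥ (Q *ᵥ z)) + 4 * (e ⬝ᵥ (P2 *ᵥ (B + L))) * (z ⬝ᵥ (Q *ᵥ e))
          + 2 * (e ⬝ᵥ (P2 *ᵥ (B + L))) * (e ⬝ᵥ (Q *ᵥ e))| ≤
        c4 * (z ⬝ᵥ (P1 *ᵥ z) + e ⬝ᵥ (P2 *ᵥ e)) ^ ((3 : ℝ) / 2) := by
  intro z e
  cases isEmpty_or_nonempty (Fin n)
  · simp [dotProduct]
  set μ1 := ⨅ i, hP1.1.eigenvalues i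
  set μ2 := ⨅ i, hP2.1.eigenvalues i
  have hμ1 : 0 < μ1 := hP1.iInf_eigenvalues_pos
  have hμ2 : 0 < μ2 := hP2.iInf_eigenvalues_pos
  have hz_nonneg := hP1.posSemidef.dotProduct_mulVec_nonneg z
  have he_nonneg := hP2.posSemidef.dotProduct_mulVec_nonneg e
  rw [star_trivial] at hz_nonneg he_nonneg
  set V := z ⬝ᵥ (P1 *ᵥ z) + e ⬝ᵥ (P2 *ᵥ e)
  have hz : evnorm z ≤ √V / √μ1 := (hP1.1.evnorm_le_sqrt_div hμ1 z).trans (by gcongr; linarith)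
  have he : evnorm e ≤ √V / √μ2 := (hP2.1.evnorm_le_sqrt_div hμ2 e).trans (by gcongr; linarith)
  rw [hc4, Real.rpow_three_halves (by positivity : 0 ≤ V), Real.rpow_three_halves hμ1.le,
    Real.rpow_three_halves hμ2.le]
  calc _ ≤ opNorm Q * (2 * evnorm (P1 *ᵥ B) * evnorm z ^ 3
          + 4 * evnorm (P2 *ᵥ (B + L)) * (evnorm z * evnorm e ^ 2)
          + 2 * evnorm (P2 *ᵥ (B + L)) * evnorm e ^ 3) := abs_higher_order_terms_le _ _ _ _ _
    _ ≤ opNorm Q * (2 * evnorm (P1 *ᵥ B) * (√V / √μ1) ^ 3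
          + 4 * evnorm (P2 *ᵥ (B + L)) * (√V / √μ1 * (√V / √μ2) ^ 2)
          + 2 * evnorm (P2 *ᵥ (B + L)) * (√V / √μ2) ^ 3) := by
        have := opNorm_nonneg Q
        have := evnorm_nonneg (P1 *ᵥ B)
        have := evnorm_nonneg (P2 *ᵥ (B + L))
        have := evnorm_nonneg z
        have := evnorm_nonneg e
        gcongr
    _ = _ := by
        have hμ2_sq : √μ2 ^ 2 = μ2 := Real.sq_sqrt hμ2.le
        -- naming `√μ2` keeps the rewrite below from reaching inside it
        set m2 := √μ2
        rw [← hμ2_sq]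
        field_simp

/-- bound on the higher-order nonlinear terms by `c_4 · V(z,e)^{3/2}`. -/
theorem higher_order_term_bound
    (n : ℕ) (P1 P2 : Matrix (Fin n) (Fin n) ℝ) (hP1 : P1.PosDef) (hP2 : P2.PosDef)
    (B L : Fin n → ℝ) (Q : Matrix (Fin n) (Fin n) ℝ) (hQ : Q.IsSymm)
    (c4 : ℝ)
    (hc4 : c4 =
      2 * evnorm (P1 *ᵥ B) * opNorm Q / (⨅ i, hP1.1.eigenvalues i) ^ ((3 : ℝ) / 2) +
      4 * evnorm (P2 *ᵥ (B + L)) * opNorm Q /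
        (Real.sqrt (⨅ i, hP1.1.eigenvalues i) * (⨅ i, hP2.1.eigenvalues i)) +
      2 * evnorm (P2 *ᵥ (B + L)) * opNorm Q / (⨅ i, hP2.1.eigenvalues i) ^ ((3 : ℝ) / 2)) :
    ∀ z e : Fin n → ℝ,
      |2 * (z ⬝ᵥ (P1 *ᵥ B)) * (z ⬝ᵥ (Q *ᵥ z)) + 4 * (e ⬝ᵥ (P2 *ᵥ (B + L))) * (z ⬝ᵥ (Q *ᵥ e))
          + 2 * (e ⬝ᵥ (P2 *ᵥ (B + L))) * (e ⬝ᵥ (Q *ᵥ e))| ≤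
        c4 * (z ⬝ᵥ (P1 *ᵥ z) + e ⬝ᵥ (P2 *ᵥ e)) ^ ((3 : ℝ) / 2) :=
  higher_order_term_bound_general n P1 P2 hP1 hP2 B L Q c4 hc4
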